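/- The element $x = :\beta\gamma^2: - :bc\gamma: + \frac32\partial\gamma$ of the semi-infinite Weil complex $\mathcal W$ satisfies $[Q,x]=0$, i.e., $x$ is a BRST cocycle of $bc$-ghost number $0$ and $\beta\gamma$-ghost number $1$. -/
import Mathlib


open scoped BigOperators

/-- Generalized binomial coefficient `m choose j` for an integer `m`, as a complex number. -/
noncomputable def zchoose (m : ℤ) (j : ℕ) : ℂ :=
  (∏ i ∈ Finset.range j, ((m : ℂ) - (i : ℂ))) / (Nat.factorial j : ℂ)

/-- A vertex superalgebra presented via its circle products `∘ₙ`, in the sense of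
Lian-Zuckerman (a commutative quantum operator algebra).  The parity grading is recorded by
the submodules `even`, `odd`; `comm_even`/`comm_odd` encode the Borcherds commutator formula
for the Fourier modes acting on the left regular module, and `iterate_even`/`iterate_odd`
encode the iterate (associativity) formula. -/
structure VA (V : Type) [AddCommGroup V] [Module ℂ V] where
  circ : ℤ → V →ₗ[ℂ] V →ₗ[ℂ] V
  one : V
  even : Submodule ℂ V
  odd : Submodule ℂ V
  one_even : one ∈ even
  circ_ee : ∀ (n : ℤ) {a b : V}, a ∈ even → b ∈ even → circ n a b ∈ even
  circ_oo : ∀ (n : ℤ) {a b : V}, a ∈ odd → b ∈ odd → circ n a b ∈ even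
  circ_eo : ∀ (n : ℤ) {a b : V}, a ∈ even → b ∈ odd → circ n a b ∈ odd
  circ_oe : ∀ (n : ℤ) {a b : V}, a ∈ odd → b ∈ even → circ n a b ∈ odd
  unit_left : ∀ (n : ℤ) (a : V), circ n one a = if n = -1 then a else 0
  unit_right_wick : ∀ a : V, circ (-1) a one = a
  unit_right_nonneg : ∀ (n : ℤ) (a : V), 0 ≤ n → circ n a one = 0
  truncate : ∀ a b : V, ∃ N : ℕ, ∀ n : ℤ, (N : ℤ) ≤ n → circ n a b = 0
  comm_even : ∀ {a b : V}, (a ∈ even ∨ b ∈ even) → ∀ (m n : ℤ) (c : V),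
    circ m a (circ n b c) - circ n b (circ m a c)
      = ∑ᶠ j : ℕ, zchoose m j • circ (m + n - (j : ℤ)) (circ (j : ℤ) a b) c
  comm_odd : ∀ {a b : V}, a ∈ odd → b ∈ odd → ∀ (m n : ℤ) (c : V),
    circ m a (circ n b c) + circ n b (circ m a c)
      = ∑ᶠ j : ℕ, zchoose m j • circ (m + n - (j : ℤ)) (circ (j : ℤ) a b) c
  iterate_even : ∀ {a b : V}, (a ∈ even ∨ b ∈ even) → ∀ (m n : ℤ) (c : V),
    circ m (circ n a b) c
      = ∑ᶠ j : ℕ, ((-1 : ℂ) ^ j * zchoose n j) •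
          (circ (n - (j : ℤ)) a (circ (m + (j : ℤ)) b c)
            - ((-1 : ℂ) ^ n) • circ (n + m - (j : ℤ)) b (circ (j : ℤ) a c))
  iterate_odd : ∀ {a b : V}, a ∈ odd → b ∈ odd → ∀ (m n : ℤ) (c : V),
    circ m (circ n a b) c
      = ∑ᶠ j : ℕ, ((-1 : ℂ) ^ j * zchoose n j) •
          (circ (n - (j : ℤ)) a (circ (m + (j : ℤ)) b c)
            + ((-1 : ℂ) ^ n) • circ (n + m - (j : ℤ)) b (circ (j : ℤ) a c))

namespace VA

variable {V : Type} [AddCommGroup V] [Module ℂ V] (A : VA V)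

/-- The formal derivative `∂a = a ∘₋₂ 1`. -/
def D (a : V) : V := A.circ (-2) a A.one

/-- The Wick (normally ordered) product `:ab: = a ∘₋₁ b`. -/
def wick (a b : V) : V := A.circ (-1) a b

end VA

namespace VA

/-- Iterated (right-normalized) Wick product of a list of elements. -/
def wlist {V : Type} [AddCommGroup V] [Module ℂ V] (A : VA V) : List V → V
  | [] => A.one
  | a :: l => A.wick a (wlist A l)

/-- Iterated Wick power. -/
def wpow {V : Type} [AddCommGroup V] [Module ℂ V] (A : VA V) (a : V) : ℕ → V
  | 0 => A.one
  | k + 1 => A.wick a (wpow A a k)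

end VA


lemma zchoose_zero (m : ℤ) : zchoose m 0 = 1 := by simp [zchoose]

lemma zchoose_zero_left {j : ℕ} (hj : j ≠ 0) : zchoose 0 j = 0 := by
  unfold zchoose
  rw [Finset.prod_eq_zero (Finset.mem_range.2 (Nat.pos_of_ne_zero hj)) (by norm_num)]
  simp

lemma prod_neg_one (j : ℕ) : (∏ i ∈ Finset.range j, ((-1 : ℂ) - (i : ℂ))) = (-1)^j * (Nat.factorial j : ℂ) := by
  induction j with
  | zero => simp
  | succ n ih =>
    rw [Finset.prod_range_succ, ih, Nat.factorial_succ]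
    push_cast
    ring

lemma prod_neg_two (j : ℕ) : (∏ i ∈ Finset.range j, ((-2 : ℂ) - (i : ℂ))) = (-1)^j * (Nat.factorial (j+1) : ℂ) := by
  induction j with
  | zero => simp
  | succ n ih =>
    rw [Finset.prod_range_succ, ih]
    have h2 : ((n+1+1).factorial : ℂ) = ((n:ℂ)+2) * ((n+1).factorial : ℂ) := by
      rw [Nat.factorial_succ]; push_cast; ring
    rw [h2, pow_succ]
    push_cast
    ring

lemma zchoose_neg_one (j : ℕ) : zchoose (-1) j = (-1)^j := by
  unfold zchoose
  push_cast
  rw [prod_neg_one]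
  have h1 : (Nat.factorial j : ℂ) ≠ 0 := by exact_mod_cast Nat.factorial_ne_zero j
  rw [mul_div_assoc, div_self h1, mul_one]

lemma zchoose_neg_two (j : ℕ) : zchoose (-2) j = (-1)^j * ((j : ℂ) + 1) := by
  unfold zchoose
  push_cast
  rw [prod_neg_two, Nat.factorial_succ]
  have h1 : (Nat.factorial j : ℂ) ≠ 0 := by exact_mod_cast Nat.factorial_ne_zero j
  push_cast
  field_simp

lemma coeff_neg_one (j : ℕ) : ((-1 : ℂ))^j * zchoose (-1) j = 1 := by
  rw [zchoose_neg_one, ← mul_pow]; simp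

lemma coeff_neg_two (j : ℕ) : ((-1 : ℂ))^j * zchoose (-2) j = (j : ℂ) + 1 := by
  rw [zchoose_neg_two, ← mul_assoc, ← mul_pow]; simp

lemma zpowm1_neg_one : ((-1 : ℂ))^(-1 : ℤ) = -1 := by norm_num
lemma zpowm1_neg_two : ((-1 : ℂ))^(-2 : ℤ) = 1 := by
  rw [show (-2 : ℤ) = (-1) + (-1) by norm_num, zpow_add₀ (by norm_num : (-1:ℂ) ≠ 0)]
  norm_num

set_option linter.unusedSectionVars false
section FinHelp
variable {V : Type} [AddCommGroup V] [Module ℂ V]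

lemma fin0 {f : ℕ → V} (h : ∀ j, f j = 0) : ∑ᶠ j, f j = 0 :=
  finsum_eq_zero_of_forall_eq_zero h

lemma finN {f : ℕ → V} (N : ℕ) (h : ∀ j, N ≤ j → f j = 0) :
    ∑ᶠ j, f j = ∑ j ∈ Finset.range N, f j := by
  apply finsum_eq_sum_of_support_subset
  intro x hx
  simp only [Finset.coe_range, Set.mem_Iio]
  by_contra hc
  exact hx (h x (by omega))

lemma fin1 {f : ℕ → V} (h : ∀ j, 1 ≤ j → f j = 0) : ∑ᶠ j, f j = f 0 := by
  rw [finN 1 h, Finset.sum_range_one]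

lemma fin2 {f : ℕ → V} (h : ∀ j, 2 ≤ j → f j = 0) : ∑ᶠ j, f j = f 0 + f 1 := by
  rw [finN 2 h, Finset.sum_range_succ, Finset.sum_range_one]

lemma fin3 {f : ℕ → V} (h : ∀ j, 3 ≤ j → f j = 0) : ∑ᶠ j, f j = f 0 + f 1 + f 2 := by
  rw [finN 3 h, Finset.sum_range_succ, Finset.sum_range_succ, Finset.sum_range_one]

end FinHelp

namespace VA
set_option linter.unusedSectionVars false
variable {V : Type} [AddCommGroup V] [Module ℂ V] (A : VA V)

lemma circ_add_left (n : ℤ) (a b y : V) : A.circ n (a + b) y = A.circ n a y + A.circ n b y := by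
  rw [map_add]; rfl

lemma circ_smul_left (n : ℤ) (κ : ℂ) (a y : V) : A.circ n (κ • a) y = κ • A.circ n a y := by
  rw [map_smul]; rfl

lemma circ_neg_left (n : ℤ) (a y : V) : A.circ n (-a) y = -A.circ n a y := by
  rw [map_neg]; rfl

lemma circ_zero_left (n : ℤ) (y : V) : A.circ n (0 : V) y = 0 := by
  rw [map_zero]; rfl

lemma D_even {u : V} (hu : u ∈ A.even) : A.D u ∈ A.even := A.circ_ee _ hu A.one_even
lemma D_odd {u : V} (hu : u ∈ A.odd) : A.D u ∈ A.odd := A.circ_oe _ hu A.one_even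

/-- The derivative mode formula: `(∂u)ₘ y = -m uₘ₋₁ y`. -/
lemma D_mode (u y : V) (m : ℤ) :
    A.circ m (A.D u) y = (-(m : ℂ)) • A.circ (m - 1) u y := by
  unfold VA.D
  rw [A.iterate_even (Or.inr A.one_even) m (-2) y]
  rcases lt_trichotomy m 0 with hm | hm | hm
  · -- m < 0 : only j = -1-m contributes
    set a : ℕ := (-1 - m).toNat with ha
    have haZ : (a : ℤ) = -1 - m := Int.toNat_of_nonneg (by omega)
    have hside : ∀ x : ℕ, x ≠ a →
        ((-1:ℂ) ^ x * zchoose (-2) x) • (A.circ (-2 - (x:ℤ)) u (A.circ (m + (x:ℤ)) A.one y)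
          - ((-1:ℂ)) ^ (-2:ℤ) • A.circ (-2 + m - (x:ℤ)) A.one (A.circ (x:ℤ) u y)) = 0 := by
      intro x hx
      have h1 : m + (x : ℤ) ≠ -1 := fun hcon => hx (by omega)
      have h2 : -2 + m - (x : ℤ) ≠ -1 := by omega
      simp only [A.unit_left, if_neg h1, if_neg h2, map_zero, smul_zero, sub_zero]
    rw [finsum_eq_single _ a hside]
    have h1 : m + (a : ℤ) = -1 := by omega
    have h2 : -2 + m - (a : ℤ) ≠ -1 := by omega
    have h3 : (-2 : ℤ) - (a : ℤ) = m - 1 := by omega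
    simp only [A.unit_left, if_pos h1, if_neg h2, smul_zero, sub_zero, h3]
    rw [coeff_neg_two]
    have h4 : ((a : ℂ) + 1) = -(m : ℂ) := by
      have h5 : ((a : ℤ) : ℂ) = ((-1 - m : ℤ) : ℂ) := by rw [haZ]
      push_cast at h5
      rw [h5]; ring
    rw [h4]
  · -- m = 0
    subst hm
    have hside : ∀ j : ℕ,
        ((-1:ℂ) ^ j * zchoose (-2) j) • (A.circ (-2 - (j:ℤ)) u (A.circ ((0:ℤ) + (j:ℤ)) A.one y)
          - ((-1:ℂ)) ^ (-2:ℤ) • A.circ (-2 + 0 - (j:ℤ)) A.one (A.circ (j:ℤ) u y)) = 0 := by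
      intro j
      have h1 : (0 : ℤ) + (j : ℤ) ≠ -1 := by omega
      have h2 : -2 + 0 - (j : ℤ) ≠ -1 := by omega
      simp only [A.unit_left, if_neg h1, if_neg h2, map_zero, smul_zero, sub_zero]
    rw [fin0 hside]
    norm_num
  · -- m > 0 : only j = m-1 contributes
    set a : ℕ := (m - 1).toNat with ha
    have haZ : (a : ℤ) = m - 1 := Int.toNat_of_nonneg (by omega)
    have hside : ∀ x : ℕ, x ≠ a →
        ((-1:ℂ) ^ x * zchoose (-2) x) • (A.circ (-2 - (x:ℤ)) u (A.circ (m + (x:ℤ)) A.one y)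
          - ((-1:ℂ)) ^ (-2:ℤ) • A.circ (-2 + m - (x:ℤ)) A.one (A.circ (x:ℤ) u y)) = 0 := by
      intro x hx
      have h1 : m + (x : ℤ) ≠ -1 := by omega
      have h2 : -2 + m - (x : ℤ) ≠ -1 := fun hcon => hx (by omega)
      simp only [A.unit_left, if_neg h1, if_neg h2, map_zero, smul_zero, sub_zero]
    rw [finsum_eq_single _ a hside]
    have h1 : m + (a : ℤ) ≠ -1 := by omega
    have h2 : -2 + m - (a : ℤ) = -1 := by omega
    simp only [A.unit_left, if_pos h2, if_neg h1, map_zero, smul_zero, zpowm1_neg_two, one_smul,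
      zero_sub]
    rw [coeff_neg_two]
    have h4 : ((a : ℂ) + 1) = (m : ℂ) := by
      have h5 : ((a : ℤ) : ℂ) = ((m - 1 : ℤ) : ℂ) := by rw [haZ]
      push_cast at h5
      rw [h5]; ring
    rw [h4, haZ, smul_neg, ← neg_smul]

/-- Commutation for a "free pair": `u ∘ⱼ v = κ δⱼ₀ 1` for `j ≥ 0`, even case. -/
lemma gcomm_even {u v : V} (κ : ℂ) (hp : u ∈ A.even ∨ v ∈ A.even)
    (h0 : A.circ 0 u v = κ • A.one) (hpos : ∀ n : ℤ, 1 ≤ n → A.circ n u v = 0)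
    (m n : ℤ) (y : V) :
    A.circ m u (A.circ n v y)
      = A.circ n v (A.circ m u y) + κ • (if m + n = -1 then y else 0) := by
  have h := A.comm_even hp m n y
  rw [finsum_eq_single _ 0 ?_] at h
  · rw [zchoose_zero] at h
    push_cast at h
    rw [sub_zero] at h
    rw [h0, circ_smul_left, A.unit_left] at h
    have h2 := eq_add_of_sub_eq h
    rw [one_smul] at h2
    rw [h2]
    abel
  · intro x hx
    rw [hpos (x : ℤ) (by exact_mod_cast Nat.one_le_iff_ne_zero.2 hx), circ_zero_left, smul_zero]

/-- Commutation for a "free pair", odd case. -/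
lemma gcomm_odd {u v : V} (κ : ℂ) (hu : u ∈ A.odd) (hv : v ∈ A.odd)
    (h0 : A.circ 0 u v = κ • A.one) (hpos : ∀ n : ℤ, 1 ≤ n → A.circ n u v = 0)
    (m n : ℤ) (y : V) :
    A.circ m u (A.circ n v y)
      = -A.circ n v (A.circ m u y) + κ • (if m + n = -1 then y else 0) := by
  have h := A.comm_odd hu hv m n y
  rw [finsum_eq_single _ 0 ?_] at h
  · rw [zchoose_zero] at h
    push_cast at h
    rw [sub_zero] at h
    rw [h0, circ_smul_left, A.unit_left] at h
    have h2 : A.circ m u (A.circ n v y)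
        = -A.circ n v (A.circ m u y) + (1:ℂ) • κ • (if m + n = -1 then y else 0) := by
      rw [← h]; abel
    rw [h2, one_smul]
  · intro x hx
    rw [hpos (x : ℤ) (by exact_mod_cast Nat.one_le_iff_ne_zero.2 hx), circ_zero_left, smul_zero]

lemma iter_m1_even {u w : V} (hp : u ∈ A.even ∨ w ∈ A.even) (m : ℤ) (y : V) :
    A.circ m (A.circ (-1) u w) y
      = ∑ᶠ j : ℕ, (A.circ (-1 - (j:ℤ)) u (A.circ (m + (j:ℤ)) w y)
          + A.circ (-1 + m - (j:ℤ)) w (A.circ (j:ℤ) u y)) := by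
  rw [A.iterate_even hp m (-1) y]
  apply finsum_congr
  intro j
  rw [coeff_neg_one, zpowm1_neg_one, one_smul, neg_one_smul, sub_neg_eq_add]

lemma iter_m1_odd {u w : V} (hu : u ∈ A.odd) (hw : w ∈ A.odd) (m : ℤ) (y : V) :
    A.circ m (A.circ (-1) u w) y
      = ∑ᶠ j : ℕ, (A.circ (-1 - (j:ℤ)) u (A.circ (m + (j:ℤ)) w y)
          - A.circ (-1 + m - (j:ℤ)) w (A.circ (j:ℤ) u y)) := by
  rw [A.iterate_odd hu hw m (-1) y]
  apply finsum_congr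
  intro j
  rw [coeff_neg_one, zpowm1_neg_one, one_smul, neg_one_smul, ← sub_eq_add_neg]

lemma iter_m2_even {u w : V} (hp : u ∈ A.even ∨ w ∈ A.even) (m : ℤ) (y : V) :
    A.circ m (A.circ (-2) u w) y
      = ∑ᶠ j : ℕ, ((j:ℂ) + 1) • (A.circ (-2 - (j:ℤ)) u (A.circ (m + (j:ℤ)) w y)
          - A.circ (-2 + m - (j:ℤ)) w (A.circ (j:ℤ) u y)) := by
  rw [A.iterate_even hp m (-2) y]
  apply finsum_congr
  intro j
  rw [zpowm1_neg_two, one_smul, coeff_neg_two]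

lemma iter_m2_odd {u w : V} (hu : u ∈ A.odd) (hw : w ∈ A.odd) (m : ℤ) (y : V) :
    A.circ m (A.circ (-2) u w) y
      = ∑ᶠ j : ℕ, ((j:ℂ) + 1) • (A.circ (-2 - (j:ℤ)) u (A.circ (m + (j:ℤ)) w y)
          + A.circ (-2 + m - (j:ℤ)) w (A.circ (j:ℤ) u y)) := by
  rw [A.iterate_odd hu hw m (-2) y]
  apply finsum_congr
  intro j
  rw [zpowm1_neg_two, one_smul, coeff_neg_two]

lemma circ_sub_left (n : ℤ) (a b y : V) : A.circ n (a - b) y = A.circ n a y - A.circ n b y := by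
  rw [map_sub]; rfl

lemma half_cancel {z : V} (h : z = -z) : z = 0 := by
  have h2 : (2:ℂ) • z = 0 := by
    rw [two_smul]
    exact add_eq_zero_iff_eq_neg.2 h
  calc z = (1/2 : ℂ) • ((2:ℂ) • z) := by rw [smul_smul]; norm_num
  _ = 0 := by rw [h2, smul_zero]

lemma D_pos_zero {u y : V} (h : ∀ k : ℤ, 0 ≤ k → A.circ k u y = 0) :
    ∀ k : ℤ, 0 ≤ k → A.circ k (A.D u) y = 0 := by
  intro k hk
  rw [A.D_mode]
  rcases eq_or_lt_of_le hk with h0 | h0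
  · rw [← h0]; norm_num
  · rw [h (k-1) (by omega), smul_zero]

lemma iter_m1_zero_even {u w : V} (hp : u ∈ A.even ∨ w ∈ A.even) {m : ℤ} (hm : 0 ≤ m) {y : V}
    (hw : ∀ k : ℤ, 0 ≤ k → A.circ k w y = 0) (hu : ∀ k : ℤ, 0 ≤ k → A.circ k u y = 0) :
    A.circ m (A.circ (-1) u w) y = 0 := by
  rw [A.iter_m1_even hp m y]
  apply fin0
  intro j
  rw [hw (m + (j:ℤ)) (by omega), hu (j:ℤ) (by omega), map_zero, map_zero, add_zero]

lemma iter_m1_zero_odd {u w : V} (hu' : u ∈ A.odd) (hw' : w ∈ A.odd) {m : ℤ} (hm : 0 ≤ m) {y : V}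
    (hw : ∀ k : ℤ, 0 ≤ k → A.circ k w y = 0) (hu : ∀ k : ℤ, 0 ≤ k → A.circ k u y = 0) :
    A.circ m (A.circ (-1) u w) y = 0 := by
  rw [A.iter_m1_odd hu' hw' m y]
  apply fin0
  intro j
  rw [hw (m + (j:ℤ)) (by omega), hu (j:ℤ) (by omega), map_zero, map_zero, sub_zero]


end VA

set_option maxHeartbeats 1000000 in
/-- The element `x = :βγ²: - :bcγ: + (3/2)∂γ` of the semi-infinite
Weil complex is a BRST cocycle: `[Q, x] = 0`. -/
theorem stmt11 (V : Type) [AddCommGroup V] [Module ℂ V] (A : VA V)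
    (b c β γ : V)
    (hb : b ∈ A.odd) (hc : c ∈ A.odd)
    (hbc0 : A.circ 0 b c = A.one) (hbc : ∀ n : ℤ, 1 ≤ n → A.circ n b c = 0)
    (hcb0 : A.circ 0 c b = A.one) (hcb : ∀ n : ℤ, 1 ≤ n → A.circ n c b = 0)
    (hbb : ∀ n : ℤ, 0 ≤ n → A.circ n b b = 0)
    (hcc : ∀ n : ℤ, 0 ≤ n → A.circ n c c = 0)
    (hβ : β ∈ A.even) (hγ : γ ∈ A.even)
    (hβγ0 : A.circ 0 β γ = A.one) (hβγ : ∀ n : ℤ, 1 ≤ n → A.circ n β γ = 0)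
    (hγβ0 : A.circ 0 γ β = -A.one) (hγβ : ∀ n : ℤ, 1 ≤ n → A.circ n γ β = 0)
    (hββ : ∀ n : ℤ, 0 ≤ n → A.circ n β β = 0)
    (hγγ : ∀ n : ℤ, 0 ≤ n → A.circ n γ γ = 0)
    (hcross : ∀ n : ℤ, 0 ≤ n →
      A.circ n b β = 0 ∧ A.circ n b γ = 0 ∧ A.circ n c β = 0 ∧ A.circ n c γ = 0 ∧
      A.circ n β b = 0 ∧ A.circ n γ b = 0 ∧ A.circ n β c = 0 ∧ A.circ n γ c = 0)
    (LS LE LW J : V)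
    (hLS : LS = A.wick (A.D β) γ + (2 : ℂ) • A.wick β (A.D γ))
    (hLE : LE = -(A.wick (A.D b) c) - (2 : ℂ) • A.wick b (A.D c))
    (hLW : LW = LE + LS)
    (hJ : J = A.wick (LS + (1 / 2 : ℂ) • LE) c + (3 / 4 : ℂ) • A.D (A.D c))
    (x : V) (hx : x = A.wick β (A.wick γ γ) - A.wick b (A.wick c γ) + (3 / 2 : ℂ) • A.D γ)
    :
    A.circ 0 J x = 0 := by
  classical
  -- unfolded forms of the data
  have hLS' : LS = A.circ (-1) (A.D β) γ + (2 : ℂ) • A.circ (-1) β (A.D γ) := hLS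
  have hLE' : LE = -(A.circ (-1) (A.D b) c) - (2 : ℂ) • A.circ (-1) b (A.D c) := hLE
  have hJ' : J = A.circ (-1) (LS + (1 / 2 : ℂ) • LE) c + (3 / 4 : ℂ) • A.D (A.D c) := hJ
  have hx' : x = A.circ (-1) β (A.circ (-1) γ γ) - A.circ (-1) b (A.circ (-1) c γ)
      + (3 / 2 : ℂ) • A.D γ := hx
  have hDγdef : A.D γ = A.circ (-2) γ A.one := rfl
  have hDcdef : A.D c = A.circ (-2) c A.one := rfl
  have hDβdef : A.D β = A.circ (-2) β A.one := rfl
  have hDbdef : A.D b = A.circ (-2) b A.one := rfl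
  -- parities
  have hDβe : A.D β ∈ A.even := A.D_even hβ
  have hDγe : A.D γ ∈ A.even := A.D_even hγ
  have hDbo : A.D b ∈ A.odd := A.D_odd hb
  have hDco : A.D c ∈ A.odd := A.D_odd hc
  have hLSe : LS ∈ A.even := by
    rw [hLS']
    exact Submodule.add_mem _ (A.circ_ee _ hDβe hγ)
      (Submodule.smul_mem _ _ (A.circ_ee _ hβ hDγe))
  have hLEe : LE ∈ A.even := by
    rw [hLE']
    exact Submodule.sub_mem _ (Submodule.neg_mem _ (A.circ_oo _ hDbo hc))
      (Submodule.smul_mem _ _ (A.circ_oo _ hb hDco))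
  have hKe : LS + (1 / 2 : ℂ) • LE ∈ A.even :=
    Submodule.add_mem _ hLSe (Submodule.smul_mem _ _ hLEe)
  have hJo : J ∈ A.odd := by
    rw [hJ']
    exact Submodule.add_mem _ (A.circ_eo _ hKe hc)
      (Submodule.smul_mem _ _ (A.D_odd (A.D_odd hc)))
  -- pair commutation lemmas
  have gβγ : ∀ (m n : ℤ) (y : V), A.circ m β (A.circ n γ y)
      = A.circ n γ (A.circ m β y) + (if m + n = -1 then y else 0) := by
    intro m n y
    have h := A.gcomm_even (u := β) (v := γ) 1 (Or.inl hβ)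
      (by rw [one_smul]; exact hβγ0) (fun k hk => hβγ k hk) m n y
    simpa using h
  have gγβ : ∀ (m n : ℤ) (y : V), A.circ m γ (A.circ n β y)
      = A.circ n β (A.circ m γ y) - (if m + n = -1 then y else 0) := by
    intro m n y
    have h := A.gcomm_even (u := γ) (v := β) (-1) (Or.inl hγ)
      (by rw [neg_smul, one_smul]; exact hγβ0) (fun k hk => hγβ k hk) m n y
    rw [h, neg_smul, one_smul, ← sub_eq_add_neg]
  have gγγ : ∀ (m n : ℤ) (y : V), A.circ m γ (A.circ n γ y)
      = A.circ n γ (A.circ m γ y) := by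
    intro m n y
    have h := A.gcomm_even (u := γ) (v := γ) 0 (Or.inl hγ)
      (by rw [zero_smul]; exact hγγ 0 le_rfl) (fun k hk => hγγ k (by omega)) m n y
    simpa using h
  have gβc : ∀ (m n : ℤ) (y : V), A.circ m β (A.circ n c y)
      = A.circ n c (A.circ m β y) := by
    intro m n y
    have h := A.gcomm_even (u := β) (v := c) 0 (Or.inl hβ)
      (by rw [zero_smul]; exact (hcross 0 le_rfl).2.2.2.2.2.2.1)
      (fun k hk => (hcross k (by omega)).2.2.2.2.2.2.1) m n y
    simpa using h
  have gγc : ∀ (m n : ℤ) (y : V), A.circ m γ (A.circ n c y)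
      = A.circ n c (A.circ m γ y) := by
    intro m n y
    have h := A.gcomm_even (u := γ) (v := c) 0 (Or.inl hγ)
      (by rw [zero_smul]; exact (hcross 0 le_rfl).2.2.2.2.2.2.2)
      (fun k hk => (hcross k (by omega)).2.2.2.2.2.2.2) m n y
    simpa using h
  have gγb : ∀ (m n : ℤ) (y : V), A.circ m γ (A.circ n b y)
      = A.circ n b (A.circ m γ y) := by
    intro m n y
    have h := A.gcomm_even (u := γ) (v := b) 0 (Or.inl hγ)
      (by rw [zero_smul]; exact (hcross 0 le_rfl).2.2.2.2.2.1)
      (fun k hk => (hcross k (by omega)).2.2.2.2.2.1) m n y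
    simpa using h
  have gcγ : ∀ (m n : ℤ) (y : V), A.circ m c (A.circ n γ y)
      = A.circ n γ (A.circ m c y) := by
    intro m n y
    have h := A.gcomm_even (u := c) (v := γ) 0 (Or.inr hγ)
      (by rw [zero_smul]; exact (hcross 0 le_rfl).2.2.2.1)
      (fun k hk => (hcross k (by omega)).2.2.2.1) m n y
    simpa using h
  have gbγ : ∀ (m n : ℤ) (y : V), A.circ m b (A.circ n γ y)
      = A.circ n γ (A.circ m b y) := by
    intro m n y
    have h := A.gcomm_even (u := b) (v := γ) 0 (Or.inr hγ)
      (by rw [zero_smul]; exact (hcross 0 le_rfl).2.1)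
      (fun k hk => (hcross k (by omega)).2.1) m n y
    simpa using h
  have gbc : ∀ (m n : ℤ) (y : V), A.circ m b (A.circ n c y)
      = -A.circ n c (A.circ m b y) + (if m + n = -1 then y else 0) := by
    intro m n y
    have h := A.gcomm_odd (u := b) (v := c) 1 hb hc
      (by rw [one_smul]; exact hbc0) (fun k hk => hbc k hk) m n y
    simpa using h
  have gcb : ∀ (m n : ℤ) (y : V), A.circ m c (A.circ n b y)
      = -A.circ n b (A.circ m c y) + (if m + n = -1 then y else 0) := by
    intro m n y
    have h := A.gcomm_odd (u := c) (v := b) 1 hc hb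
      (by rw [one_smul]; exact hcb0) (fun k hk => hcb k hk) m n y
    simpa using h
  have gcc : ∀ (m n : ℤ) (y : V), A.circ m c (A.circ n c y)
      = -A.circ n c (A.circ m c y) := by
    intro m n y
    have h := A.gcomm_odd (u := c) (v := c) 0 hc hc
      (by rw [zero_smul]; exact hcc 0 le_rfl) (fun k hk => hcc k (by omega)) m n y
    simpa using h
  -- evaluation of nonnegative generator modes on basic states
  have e_β_γγ : ∀ k : ℤ, 0 ≤ k → A.circ k β (A.circ (-1) γ γ)
      = if k = 0 then (2:ℂ) • γ else 0 := by
    intro k hk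
    rw [gβγ k (-1) γ]
    by_cases h0 : k = 0
    · subst h0
      rw [hβγ0, A.unit_right_wick, if_pos (by norm_num : (0:ℤ) + -1 = -1), if_pos rfl, two_smul]
    · rw [hβγ k (by omega), map_zero, if_neg (by omega : k + -1 ≠ -1), if_neg h0, add_zero]
  have e_γ_γγ : ∀ k : ℤ, 0 ≤ k → A.circ k γ (A.circ (-1) γ γ) = 0 := by
    intro k hk
    rw [gγγ k (-1) γ, hγγ k hk, map_zero]
  have e_c_γγ : ∀ k : ℤ, 0 ≤ k → A.circ k c (A.circ (-1) γ γ) = 0 := by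
    intro k hk
    rw [gcγ k (-1) γ, (hcross k hk).2.2.2.1, map_zero]
  have e_b_γγ : ∀ k : ℤ, 0 ≤ k → A.circ k b (A.circ (-1) γ γ) = 0 := by
    intro k hk
    rw [gbγ k (-1) γ, (hcross k hk).2.1, map_zero]
  have e_β_cγ : ∀ k : ℤ, 0 ≤ k → A.circ k β (A.circ (-1) c γ)
      = if k = 0 then c else 0 := by
    intro k hk
    rw [gβc k (-1) γ]
    by_cases h0 : k = 0
    · subst h0
      rw [hβγ0, A.unit_right_wick, if_pos rfl]
    · rw [hβγ k (by omega), map_zero, if_neg h0]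
  have e_γ_cγ : ∀ k : ℤ, 0 ≤ k → A.circ k γ (A.circ (-1) c γ) = 0 := by
    intro k hk
    rw [gγc k (-1) γ, hγγ k hk, map_zero]
  have e_c_cγ : ∀ k : ℤ, 0 ≤ k → A.circ k c (A.circ (-1) c γ) = 0 := by
    intro k hk
    rw [gcc k (-1) γ, (hcross k hk).2.2.2.1, map_zero, neg_zero]
  have e_b_cγ : ∀ k : ℤ, 0 ≤ k → A.circ k b (A.circ (-1) c γ)
      = if k = 0 then γ else 0 := by
    intro k hk
    rw [gbc k (-1) γ, (hcross k hk).2.1, map_zero, neg_zero, zero_add]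
    by_cases h0 : k = 0
    · rw [if_pos (by omega), if_pos h0]
    · rw [if_neg (by omega), if_neg h0]
  -- modes of the Virasoro components on generators
  have q1β : ∀ l : ℤ, 0 ≤ l → A.circ l (A.circ (-1) (A.D β) γ) β
      = if l = 0 then -(A.D β) else 0 := by
    intro l hl
    rw [A.iter_m1_even (Or.inl hDβe) l β]
    have hside : ∀ j : ℕ, 1 ≤ j → (A.circ (-1 - (j:ℤ)) (A.D β) (A.circ (l + (j:ℤ)) γ β)
        + A.circ (-1 + l - (j:ℤ)) γ (A.circ (j:ℤ) (A.D β) β)) = 0 := by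
      intro j hj
      rw [hγβ (l + (j:ℤ)) (by omega), map_zero, A.D_mode, hββ ((j:ℤ) - 1) (by omega), smul_zero,
        map_zero, add_zero]
    rw [fin1 hside, A.D_mode, A.D_mode]
    norm_num
    by_cases h0 : l = 0
    · subst h0
      rw [hγβ0, map_neg, if_pos rfl, hDβdef]
    · rw [hγβ l (by omega), map_zero, if_neg h0]
  have q1γ : ∀ l : ℤ, 0 ≤ l → A.circ l (A.circ (-1) (A.D β) γ) γ
      = if l = 0 then -(A.D γ) else if l = 1 then -γ else 0 := by
    intro l hl
    rw [A.iter_m1_even (Or.inl hDβe) l γ]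
    have hside : ∀ j : ℕ, 2 ≤ j → (A.circ (-1 - (j:ℤ)) (A.D β) (A.circ (l + (j:ℤ)) γ γ)
        + A.circ (-1 + l - (j:ℤ)) γ (A.circ (j:ℤ) (A.D β) γ)) = 0 := by
      intro j hj
      rw [hγγ (l + (j:ℤ)) (by omega), map_zero, A.D_mode, hβγ ((j:ℤ) - 1) (by omega), smul_zero,
        map_zero, add_zero]
    rw [fin2 hside, A.D_mode, A.D_mode, A.D_mode, A.D_mode]
    norm_num
    rw [hγγ l hl, hγγ (l+1) (by omega), hβγ0, map_zero, map_zero]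
    norm_num
    have hidx : -1 + l - 1 = l - 2 := by ring
    rw [hidx]
    rcases (by omega : l = 0 ∨ l = 1 ∨ 2 ≤ l) with h | h | h
    · subst h
      rw [if_pos rfl]
      norm_num
      rw [← hDγdef]
    · subst h
      rw [if_neg (by norm_num), if_pos rfl]
      norm_num [A.unit_right_wick]
    · rw [if_neg (by omega), if_neg (by omega), A.unit_right_nonneg (l-2) γ (by omega), neg_zero]
  have q2β : ∀ l : ℤ, 0 ≤ l → A.circ l (A.circ (-1) β (A.D γ)) β
      = if l = 0 then A.D β else if l = 1 then β else 0 := by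
    intro l hl
    rw [A.iter_m1_even (Or.inl hβ) l β]
    have hside : ∀ j : ℕ, 2 ≤ j → (A.circ (-1 - (j:ℤ)) β (A.circ (l + (j:ℤ)) (A.D γ) β)
        + A.circ (-1 + l - (j:ℤ)) (A.D γ) (A.circ (j:ℤ) β β)) = 0 := by
      intro j hj
      rw [A.D_mode, hγβ (l + (j:ℤ) - 1) (by omega), smul_zero, map_zero,
        hββ (j:ℤ) (by omega), map_zero, add_zero]
    rw [fin2 hside]
    rcases (by omega : l = 0 ∨ l = 1 ∨ 2 ≤ l) with h | h | h
    · subst h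
      simp (disch := omega) [A.D_mode, hββ, hγβ0, ← hDβdef]
    · subst h
      simp (disch := omega) [A.D_mode, hββ, hγβ0, hγβ, A.unit_right_wick]
    · simp (disch := omega) [A.D_mode, hββ, hγβ, hγβ0, A.unit_right_nonneg,
        if_neg (by omega : ¬ l = 0), if_neg (by omega : ¬ l = 1)]
  have q2γ : ∀ l : ℤ, 0 ≤ l → A.circ l (A.circ (-1) β (A.D γ)) γ
      = if l = 0 then A.D γ else 0 := by
    intro l hl
    rw [A.iter_m1_even (Or.inl hβ) l γ]
    have hside : ∀ j : ℕ, 1 ≤ j → (A.circ (-1 - (j:ℤ)) β (A.circ (l + (j:ℤ)) (A.D γ) γ)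
        + A.circ (-1 + l - (j:ℤ)) (A.D γ) (A.circ (j:ℤ) β γ)) = 0 := by
      intro j hj
      rw [A.D_mode, hγγ (l + (j:ℤ) - 1) (by omega), smul_zero, map_zero,
        hβγ (j:ℤ) (by omega), map_zero, add_zero]
    rw [fin1 hside]
    rcases (by omega : l = 0 ∨ l = 1 ∨ 2 ≤ l) with h | h | h
    · subst h
      simp (disch := omega) [A.D_mode, hγγ, hβγ0, ← hDγdef]
    · subst h
      simp (disch := omega) [A.D_mode, hγγ, hβγ0, A.unit_right_nonneg]
    · simp (disch := omega) [A.D_mode, hγγ, hβγ0, A.unit_right_nonneg,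
        if_neg (by omega : ¬ l = 0)]
  have q3b : ∀ l : ℤ, 0 ≤ l → A.circ l (A.circ (-1) (A.D b) c) b
      = if l = 0 then A.D b else 0 := by
    intro l hl
    rw [A.iter_m1_odd hDbo hc l b]
    have hside : ∀ j : ℕ, 1 ≤ j → (A.circ (-1 - (j:ℤ)) (A.D b) (A.circ (l + (j:ℤ)) (c) b)
        - A.circ (-1 + l - (j:ℤ)) (c) (A.circ (j:ℤ) (A.D b) b)) = 0 := by
      intro j hj
      rw [hcb (l + (j:ℤ)) (by omega), map_zero, A.D_mode, hbb ((j:ℤ) - 1) (by omega),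
        smul_zero, map_zero, sub_zero]
    rw [fin1 hside]
    by_cases h0 : l = 0
    · subst h0
      simp (disch := omega) [A.D_mode, hbb, hcb0, ← hDbdef]
    · simp (disch := omega) [A.D_mode, hbb, hcb, if_neg h0]
  have q3c : ∀ l : ℤ, 0 ≤ l → A.circ l (A.circ (-1) (A.D b) c) c
      = if l = 0 then A.D c else if l = 1 then c else 0 := by
    intro l hl
    rw [A.iter_m1_odd hDbo hc l c]
    have hside : ∀ j : ℕ, 2 ≤ j → (A.circ (-1 - (j:ℤ)) (A.D b) (A.circ (l + (j:ℤ)) (c) c)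
        - A.circ (-1 + l - (j:ℤ)) (c) (A.circ (j:ℤ) (A.D b) c)) = 0 := by
      intro j hj
      rw [hcc (l + (j:ℤ)) (by omega), map_zero, A.D_mode, hbc ((j:ℤ) - 1) (by omega),
        smul_zero, map_zero, sub_zero]
    rw [fin2 hside]
    rcases (by omega : l = 0 ∨ l = 1 ∨ 2 ≤ l) with h | h | h
    · subst h
      simp (disch := omega) [A.D_mode, hcc, hbc0, ← hDcdef]
    · subst h
      simp (disch := omega) [A.D_mode, hcc, hbc0, hbc, A.unit_right_wick]
    · simp (disch := omega) [A.D_mode, hcc, hbc, hbc0, A.unit_right_nonneg,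
        if_neg (by omega : ¬ l = 0), if_neg (by omega : ¬ l = 1)]
  have q4b : ∀ l : ℤ, 0 ≤ l → A.circ l (A.circ (-1) b (A.D c)) b
      = if l = 0 then -(A.D b) else if l = 1 then -b else 0 := by
    intro l hl
    rw [A.iter_m1_odd hb hDco l b]
    have hside : ∀ j : ℕ, 2 ≤ j → (A.circ (-1 - (j:ℤ)) b (A.circ (l + (j:ℤ)) (A.D c) b)
        - A.circ (-1 + l - (j:ℤ)) (A.D c) (A.circ (j:ℤ) b b)) = 0 := by
      intro j hj
      rw [A.D_mode, hcb (l + (j:ℤ) - 1) (by omega), smul_zero, map_zero,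
        hbb (j:ℤ) (by omega), map_zero, sub_zero]
    rw [fin2 hside]
    rcases (by omega : l = 0 ∨ l = 1 ∨ 2 ≤ l) with h | h | h
    · subst h
      simp (disch := omega) [A.D_mode, hbb, hcb0, ← hDbdef]
    · subst h
      simp (disch := omega) [A.D_mode, hbb, hcb0, hcb, A.unit_right_wick]
    · simp (disch := omega) [A.D_mode, hbb, hcb, hcb0, A.unit_right_nonneg,
        if_neg (by omega : ¬ l = 0), if_neg (by omega : ¬ l = 1)]
  have q4c : ∀ l : ℤ, 0 ≤ l → A.circ l (A.circ (-1) b (A.D c)) c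
      = if l = 0 then -(A.D c) else 0 := by
    intro l hl
    rw [A.iter_m1_odd hb hDco l c]
    have hside : ∀ j : ℕ, 1 ≤ j → (A.circ (-1 - (j:ℤ)) b (A.circ (l + (j:ℤ)) (A.D c) c)
        - A.circ (-1 + l - (j:ℤ)) (A.D c) (A.circ (j:ℤ) b c)) = 0 := by
      intro j hj
      rw [A.D_mode, hcc (l + (j:ℤ) - 1) (by omega), smul_zero, map_zero,
        hbc (j:ℤ) (by omega), map_zero, sub_zero]
    rw [fin1 hside]
    rcases (by omega : l = 0 ∨ l = 1 ∨ 2 ≤ l) with h | h | h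
    · subst h
      simp (disch := omega) [A.D_mode, hcc, hbc0, ← hDcdef]
    · subst h
      simp (disch := omega) [A.D_mode, hcc, hbc0, A.unit_right_nonneg]
    · simp (disch := omega) [A.D_mode, hcc, hbc0, A.unit_right_nonneg,
        if_neg (by omega : ¬ l = 0)]
  -- total cross-vanishing lemmas
  have zbβ : ∀ n : ℤ, 0 ≤ n → A.circ n b β = 0 := fun n hn => (hcross n hn).1
  have zbγ : ∀ n : ℤ, 0 ≤ n → A.circ n b γ = 0 := fun n hn => (hcross n hn).2.1
  have zcβ : ∀ n : ℤ, 0 ≤ n → A.circ n c β = 0 := fun n hn => (hcross n hn).2.2.1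
  have zcγ : ∀ n : ℤ, 0 ≤ n → A.circ n c γ = 0 := fun n hn => (hcross n hn).2.2.2.1
  have zβb : ∀ n : ℤ, 0 ≤ n → A.circ n β b = 0 := fun n hn => (hcross n hn).2.2.2.2.1
  have zγb : ∀ n : ℤ, 0 ≤ n → A.circ n γ b = 0 := fun n hn => (hcross n hn).2.2.2.2.2.1
  have zβc : ∀ n : ℤ, 0 ≤ n → A.circ n β c = 0 := fun n hn => (hcross n hn).2.2.2.2.2.2.1
  have zγc : ∀ n : ℤ, 0 ≤ n → A.circ n γ c = 0 := fun n hn => (hcross n hn).2.2.2.2.2.2.2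
  -- cross vanishing of component modes
  have q1b : ∀ l : ℤ, 0 ≤ l → A.circ l (A.circ (-1) (A.D β) γ) b = 0 :=
    fun l hl => A.iter_m1_zero_even (Or.inl hDβe) hl zγb (A.D_pos_zero zβb)
  have q1c : ∀ l : ℤ, 0 ≤ l → A.circ l (A.circ (-1) (A.D β) γ) c = 0 :=
    fun l hl => A.iter_m1_zero_even (Or.inl hDβe) hl zγc (A.D_pos_zero zβc)
  have q2b : ∀ l : ℤ, 0 ≤ l → A.circ l (A.circ (-1) β (A.D γ)) b = 0 :=
    fun l hl => A.iter_m1_zero_even (Or.inl hβ) hl (A.D_pos_zero zγb) zβb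
  have q2c : ∀ l : ℤ, 0 ≤ l → A.circ l (A.circ (-1) β (A.D γ)) c = 0 :=
    fun l hl => A.iter_m1_zero_even (Or.inl hβ) hl (A.D_pos_zero zγc) zβc
  have q3β : ∀ l : ℤ, 0 ≤ l → A.circ l (A.circ (-1) (A.D b) c) β = 0 :=
    fun l hl => A.iter_m1_zero_odd hDbo hc hl zcβ (A.D_pos_zero zbβ)
  have q3γ : ∀ l : ℤ, 0 ≤ l → A.circ l (A.circ (-1) (A.D b) c) γ = 0 :=
    fun l hl => A.iter_m1_zero_odd hDbo hc hl zcγ (A.D_pos_zero zbγ)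
  have q4β : ∀ l : ℤ, 0 ≤ l → A.circ l (A.circ (-1) b (A.D c)) β = 0 :=
    fun l hl => A.iter_m1_zero_odd hb hDco hl (A.D_pos_zero zcβ) zbβ
  have q4γ : ∀ l : ℤ, 0 ≤ l → A.circ l (A.circ (-1) b (A.D c)) γ = 0 :=
    fun l hl => A.iter_m1_zero_odd hb hDco hl (A.D_pos_zero zcγ) zbγ
  -- modes of K = LS + (1/2) LE on generators
  have pKβ : ∀ l : ℤ, 0 ≤ l → A.circ l (LS + (1/2:ℂ) • LE) β
      = if l = 0 then A.D β else if l = 1 then (2:ℂ) • β else 0 := by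
    intro l hl
    rw [A.circ_add_left, A.circ_smul_left, hLS', hLE', A.circ_add_left, A.circ_smul_left,
      A.circ_sub_left, A.circ_neg_left, A.circ_smul_left,
      q1β l hl, q2β l hl, q3β l hl, q4β l hl]
    rcases (by omega : l = 0 ∨ l = 1 ∨ 2 ≤ l) with h | h | h
    · subst h; norm_num <;> module
    · subst h; norm_num <;> module
    · simp only [if_neg (by omega : ¬ l = 0), if_neg (by omega : ¬ l = 1)] <;> module
  have pKγ : ∀ l : ℤ, 0 ≤ l → A.circ l (LS + (1/2:ℂ) • LE) γ
      = if l = 0 then A.D γ else if l = 1 then -γ else 0 := by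
    intro l hl
    rw [A.circ_add_left, A.circ_smul_left, hLS', hLE', A.circ_add_left, A.circ_smul_left,
      A.circ_sub_left, A.circ_neg_left, A.circ_smul_left,
      q1γ l hl, q2γ l hl, q3γ l hl, q4γ l hl]
    rcases (by omega : l = 0 ∨ l = 1 ∨ 2 ≤ l) with h | h | h
    · subst h; norm_num <;> module
    · subst h; norm_num <;> module
    · simp only [if_neg (by omega : ¬ l = 0), if_neg (by omega : ¬ l = 1)] <;> module
  have pKb : ∀ l : ℤ, 0 ≤ l → A.circ l (LS + (1/2:ℂ) • LE) b
      = if l = 0 then (1/2:ℂ) • A.D b else if l = 1 then b else 0 := by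
    intro l hl
    rw [A.circ_add_left, A.circ_smul_left, hLS', hLE', A.circ_add_left, A.circ_smul_left,
      A.circ_sub_left, A.circ_neg_left, A.circ_smul_left,
      q1b l hl, q2b l hl, q3b l hl, q4b l hl]
    rcases (by omega : l = 0 ∨ l = 1 ∨ 2 ≤ l) with h | h | h
    · subst h; norm_num <;> module
    · subst h; norm_num <;> module
    · simp only [if_neg (by omega : ¬ l = 0), if_neg (by omega : ¬ l = 1)] <;> module
  have pKc : ∀ l : ℤ, 0 ≤ l → A.circ l (LS + (1/2:ℂ) • LE) c
      = if l = 0 then (1/2:ℂ) • A.D c else if l = 1 then (-(1/2:ℂ)) • c else 0 := by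
    intro l hl
    rw [A.circ_add_left, A.circ_smul_left, hLS', hLE', A.circ_add_left, A.circ_smul_left,
      A.circ_sub_left, A.circ_neg_left, A.circ_smul_left,
      q1c l hl, q2c l hl, q3c l hl, q4c l hl]
    rcases (by omega : l = 0 ∨ l = 1 ∨ 2 ≤ l) with h | h | h
    · subst h; norm_num <;> module
    · subst h; norm_num <;> module
    · simp only [if_neg (by omega : ¬ l = 0), if_neg (by omega : ¬ l = 1)] <;> module
  -- Q-values on generators
  have hQaux : ∀ g : V, A.circ 0 J g = A.circ 0 (A.circ (-1) (LS + (1/2:ℂ) • LE) c) g := by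
    intro g
    rw [hJ', A.circ_add_left, A.circ_smul_left, A.D_mode]
    norm_num
  have hQβ : A.circ 0 J β = A.circ (-1) c (A.D β) + (2:ℂ) • A.circ (-2) c β := by
    rw [hQaux β, A.iter_m1_even (Or.inl hKe) 0 β]
    have hside : ∀ j : ℕ, 2 ≤ j →
        (A.circ (-1 - (j:ℤ)) (LS + (1/2:ℂ) • LE) (A.circ (0 + (j:ℤ)) c β)
        + A.circ (-1 + 0 - (j:ℤ)) c (A.circ (j:ℤ) (LS + (1/2:ℂ) • LE) β)) = 0 := by
      intro j hj
      rw [zcβ (0 + (j:ℤ)) (by omega), map_zero, pKβ (j:ℤ) (by omega),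
        if_neg (by omega), if_neg (by omega), map_zero, add_zero]
    rw [fin2 hside]
    simp (disch := omega) [hLS', hLE', q1β, q2β, q3β, q4β, zcβ]
    module
  have hQγ : A.circ 0 J γ = A.circ (-1) c (A.D γ) - A.circ (-2) c γ := by
    rw [hQaux γ, A.iter_m1_even (Or.inl hKe) 0 γ]
    have hside : ∀ j : ℕ, 2 ≤ j →
        (A.circ (-1 - (j:ℤ)) (LS + (1/2:ℂ) • LE) (A.circ (0 + (j:ℤ)) c γ)
        + A.circ (-1 + 0 - (j:ℤ)) c (A.circ (j:ℤ) (LS + (1/2:ℂ) • LE) γ)) = 0 := by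
      intro j hj
      rw [zcγ (0 + (j:ℤ)) (by omega), map_zero, pKγ (j:ℤ) (by omega),
        if_neg (by omega), if_neg (by omega), map_zero, add_zero]
    rw [fin2 hside]
    simp (disch := omega) [hLS', hLE', q1γ, q2γ, q3γ, q4γ, zcγ, sub_eq_add_neg]
    module
  have hQb : A.circ 0 J b = (LS + (1/2:ℂ) • LE) + (1/2:ℂ) • A.circ (-1) c (A.D b)
      + A.circ (-2) c b := by
    rw [hQaux b, A.iter_m1_even (Or.inl hKe) 0 b]
    have hside : ∀ j : ℕ, 2 ≤ j →
        (A.circ (-1 - (j:ℤ)) (LS + (1/2:ℂ) • LE) (A.circ (0 + (j:ℤ)) c b)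
        + A.circ (-1 + 0 - (j:ℤ)) c (A.circ (j:ℤ) (LS + (1/2:ℂ) • LE) b)) = 0 := by
      intro j hj
      rw [hcb (0 + (j:ℤ)) (by omega), map_zero, pKb (j:ℤ) (by omega),
        if_neg (by omega), if_neg (by omega), map_zero, add_zero]
    rw [fin2 hside]
    simp (disch := omega) [hLS', hLE', q1b, q2b, q3b, q4b, hcb, hcb0, A.unit_right_wick]
    module
  have hQc : A.circ 0 J c = -A.circ (-2) c c := by
    rw [hQaux c, A.iter_m1_even (Or.inl hKe) 0 c]
    have hside : ∀ j : ℕ, 2 ≤ j →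
        (A.circ (-1 - (j:ℤ)) (LS + (1/2:ℂ) • LE) (A.circ (0 + (j:ℤ)) c c)
        + A.circ (-1 + 0 - (j:ℤ)) c (A.circ (j:ℤ) (LS + (1/2:ℂ) • LE) c)) = 0 := by
      intro j hj
      rw [hcc (0 + (j:ℤ)) (by omega), map_zero, pKc (j:ℤ) (by omega),
        if_neg (by omega), if_neg (by omega), map_zero, add_zero]
    rw [fin2 hside]
    have hswap : A.circ (-1) c (A.D c) = -A.circ (-2) c c := by
      rw [hDcdef, gcc (-1) (-2) A.one, A.unit_right_wick]
    simp (disch := omega) [hLS', hLE', q1c, q2c, q3c, q4c, hcc, hswap]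
    module
  -- derivation property of Q = J(0)
  have dQe : ∀ (u : V), u ∈ A.even → ∀ (n : ℤ) (y : V),
      A.circ 0 J (A.circ n u y)
        = A.circ n u (A.circ 0 J y) + A.circ n (A.circ 0 J u) y := by
    intro u hu n y
    have h := A.comm_even (a := J) (b := u) (Or.inr hu) 0 n y
    have hside : ∀ j : ℕ, j ≠ 0 →
        zchoose 0 j • A.circ (0 + n - (j:ℤ)) (A.circ (j:ℤ) J u) y = 0 := by
      intro j hj
      rw [zchoose_zero_left hj, zero_smul]
    rw [finsum_eq_single _ 0 hside, zchoose_zero, one_smul] at h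
    have h2 := eq_add_of_sub_eq h
    rw [h2]
    have hidx : (0:ℤ) + n - ((0:ℕ):ℤ) = n := by norm_num
    rw [hidx]
    simp only [Nat.cast_zero]
    abel
  have dQo : ∀ (u : V), u ∈ A.odd → ∀ (n : ℤ) (y : V),
      A.circ 0 J (A.circ n u y)
        = A.circ n (A.circ 0 J u) y - A.circ n u (A.circ 0 J y) := by
    intro u hu n y
    have h := A.comm_odd (a := J) (b := u) hJo hu 0 n y
    have hside : ∀ j : ℕ, j ≠ 0 →
        zchoose 0 j • A.circ (0 + n - (j:ℤ)) (A.circ (j:ℤ) J u) y = 0 := by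
      intro j hj
      rw [zchoose_zero_left hj, zero_smul]
    rw [finsum_eq_single _ 0 hside, zchoose_zero, one_smul] at h
    have h2 := eq_sub_of_add_eq h
    rw [h2]
    have hidx : (0:ℤ) + n - ((0:ℕ):ℤ) = n := by norm_num
    rw [hidx]
    simp only [Nat.cast_zero]
  -- flattening instances
  have I1 : A.circ (-1) (A.circ (-1) c (A.D β)) (A.circ (-1) γ γ)
      = A.circ (-1) c (A.circ (-2) β (A.circ (-1) γ γ)) - (2:ℂ) • A.circ (-3) c γ := by
    rw [A.iter_m1_even (Or.inr hDβe) (-1) (A.circ (-1) γ γ)]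
    have hside : ∀ j : ℕ, 3 ≤ j →
        (A.circ (-1 - (j:ℤ)) c (A.circ (-1 + (j:ℤ)) (A.D β) (A.circ (-1) γ γ))
        + A.circ (-1 + -1 - (j:ℤ)) (A.D β) (A.circ (j:ℤ) c (A.circ (-1) γ γ))) = 0 := by
      intro j hj
      rw [A.D_mode, e_β_γγ (-1 + (j:ℤ) - 1) (by omega), if_neg (by omega), smul_zero, map_zero,
        e_c_γγ (j:ℤ) (by omega), map_zero, add_zero]
    rw [fin3 hside]
    simp (disch := omega) [A.D_mode, e_β_γγ, e_c_γγ]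
    try module
  have I2 : A.circ (-1) (A.circ (-2) c β) (A.circ (-1) γ γ)
      = A.circ (-2) c (A.circ (-1) β (A.circ (-1) γ γ)) + (4:ℂ) • A.circ (-3) c γ := by
    rw [A.iter_m2_even (Or.inr hβ) (-1) (A.circ (-1) γ γ)]
    have hside : ∀ j : ℕ, 2 ≤ j →
        ((j:ℂ) + 1) • (A.circ (-2 - (j:ℤ)) c (A.circ (-1 + (j:ℤ)) β (A.circ (-1) γ γ))
        - A.circ (-2 + -1 - (j:ℤ)) β (A.circ (j:ℤ) c (A.circ (-1) γ γ))) = 0 := by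
      intro j hj
      rw [e_β_γγ (-1 + (j:ℤ)) (by omega), if_neg (by omega), map_zero,
        e_c_γγ (j:ℤ) (by omega), map_zero, sub_zero, smul_zero]
    rw [fin2 hside]
    simp (disch := omega) [e_β_γγ, e_c_γγ]
    try module
  have I3 : A.circ (-1) (A.circ (-1) c (A.D γ)) γ = A.circ (-1) c (A.circ (-2) γ γ) := by
    rw [A.iter_m1_even (Or.inr hDγe) (-1) γ]
    have hside : ∀ j : ℕ, 2 ≤ j →
        (A.circ (-1 - (j:ℤ)) c (A.circ (-1 + (j:ℤ)) (A.D γ) γ)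
        + A.circ (-1 + -1 - (j:ℤ)) (A.D γ) (A.circ (j:ℤ) c γ)) = 0 := by
      intro j hj
      rw [A.D_mode, hγγ (-1 + (j:ℤ) - 1) (by omega), smul_zero, map_zero,
        zcγ (j:ℤ) (by omega), map_zero, add_zero]
    rw [fin2 hside]
    simp (disch := omega) [A.D_mode, hγγ, zcγ]
  have I4 : A.circ (-1) (A.circ (-2) c γ) γ = A.circ (-2) c (A.circ (-1) γ γ) := by
    rw [A.iter_m2_even (Or.inr hγ) (-1) γ]
    have hside : ∀ j : ℕ, 1 ≤ j →
        ((j:ℂ) + 1) • (A.circ (-2 - (j:ℤ)) c (A.circ (-1 + (j:ℤ)) γ γ)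
        - A.circ (-2 + -1 - (j:ℤ)) γ (A.circ (j:ℤ) c γ)) = 0 := by
      intro j hj
      rw [hγγ (-1 + (j:ℤ)) (by omega), map_zero, zcγ (j:ℤ) (by omega), map_zero, sub_zero,
        smul_zero]
    rw [fin1 hside]
    simp (disch := omega) [hγγ, zcγ]
  have I5 : A.circ (-1) (A.circ (-1) (A.D β) γ) (A.circ (-1) c γ)
      = A.circ (-1) c (A.circ (-2) β (A.circ (-1) γ γ)) - A.circ (-1) c (A.circ (-3) γ A.one) := by
    rw [A.iter_m1_even (Or.inl hDβe) (-1) (A.circ (-1) c γ)]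
    have hside : ∀ j : ℕ, 3 ≤ j →
        (A.circ (-1 - (j:ℤ)) (A.D β) (A.circ (-1 + (j:ℤ)) γ (A.circ (-1) c γ))
        + A.circ (-1 + -1 - (j:ℤ)) γ (A.circ (j:ℤ) (A.D β) (A.circ (-1) c γ))) = 0 := by
      intro j hj
      rw [e_γ_cγ (-1 + (j:ℤ)) (by omega), map_zero, A.D_mode,
        e_β_cγ ((j:ℤ) - 1) (by omega), if_neg (by omega), smul_zero, map_zero, add_zero]
    rw [fin3 hside]
    have swγc : A.circ (-1) γ (A.circ (-1) c γ) = A.circ (-1) c (A.circ (-1) γ γ) :=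
      gγc (-1) (-1) γ
    have swγ3c : A.circ (-3) γ c = A.circ (-1) c (A.circ (-3) γ A.one) := by
      conv_lhs => rw [← A.unit_right_wick c]
      rw [gγc (-3) (-1) A.one]
    simp (disch := omega) [A.D_mode, e_γ_cγ, e_β_cγ, swγc, swγ3c, gβc]
    try module
  have I6 : A.circ (-1) (A.circ (-1) β (A.D γ)) (A.circ (-1) c γ)
      = A.circ (-1) c (A.circ (-1) β (A.circ (-2) γ γ))
        + (2:ℂ) • A.circ (-1) c (A.circ (-3) γ A.one) := by
    rw [A.iter_m1_even (Or.inl hβ) (-1) (A.circ (-1) c γ)]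
    have hside : ∀ j : ℕ, 2 ≤ j →
        (A.circ (-1 - (j:ℤ)) β (A.circ (-1 + (j:ℤ)) (A.D γ) (A.circ (-1) c γ))
        + A.circ (-1 + -1 - (j:ℤ)) (A.D γ) (A.circ (j:ℤ) β (A.circ (-1) c γ))) = 0 := by
      intro j hj
      rw [A.D_mode, e_γ_cγ (-1 + (j:ℤ) - 1) (by omega), smul_zero, map_zero,
        e_β_cγ (j:ℤ) (by omega), if_neg (by omega), map_zero, add_zero]
    rw [fin2 hside]
    have swγc2 : A.circ (-2) γ (A.circ (-1) c γ) = A.circ (-1) c (A.circ (-2) γ γ) :=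
      gγc (-2) (-1) γ
    have swγ3c : A.circ (-3) γ c = A.circ (-1) c (A.circ (-3) γ A.one) := by
      conv_lhs => rw [← A.unit_right_wick c]
      rw [gγc (-3) (-1) A.one]
    simp (disch := omega) [A.D_mode, e_γ_cγ, e_β_cγ, swγc2, swγ3c, gβc]
    try module
  have hccγ : A.circ (-1) c (A.circ (-1) c γ) = 0 :=
    VA.half_cancel (gcc (-1) (-1) γ)
  have I7 : A.circ (-1) (A.circ (-1) (A.D b) c) (A.circ (-1) c γ) = A.circ (-3) c γ := by
    rw [A.iter_m1_odd hDbo hc (-1) (A.circ (-1) c γ)]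
    have hside : ∀ j : ℕ, 3 ≤ j →
        (A.circ (-1 - (j:ℤ)) (A.D b) (A.circ (-1 + (j:ℤ)) c (A.circ (-1) c γ))
        - A.circ (-1 + -1 - (j:ℤ)) c (A.circ (j:ℤ) (A.D b) (A.circ (-1) c γ))) = 0 := by
      intro j hj
      rw [e_c_cγ (-1 + (j:ℤ)) (by omega), map_zero, A.D_mode,
        e_b_cγ ((j:ℤ) - 1) (by omega), if_neg (by omega), smul_zero, map_zero, sub_zero]
    rw [fin3 hside]
    simp (disch := omega) [A.D_mode, e_c_cγ, e_b_cγ, hccγ]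
    try module
  have I8 : A.circ (-1) (A.circ (-1) b (A.D c)) (A.circ (-1) c γ)
      = A.circ (-1) b (A.circ (-2) c (A.circ (-1) c γ)) - (2:ℂ) • A.circ (-3) c γ := by
    rw [A.iter_m1_odd hb hDco (-1) (A.circ (-1) c γ)]
    have hside : ∀ j : ℕ, 2 ≤ j →
        (A.circ (-1 - (j:ℤ)) b (A.circ (-1 + (j:ℤ)) (A.D c) (A.circ (-1) c γ))
        - A.circ (-1 + -1 - (j:ℤ)) (A.D c) (A.circ (j:ℤ) b (A.circ (-1) c γ))) = 0 := by
      intro j hj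
      rw [A.D_mode, e_c_cγ (-1 + (j:ℤ) - 1) (by omega), smul_zero, map_zero,
        e_b_cγ (j:ℤ) (by omega), if_neg (by omega), map_zero, sub_zero]
    rw [fin2 hside]
    simp (disch := omega) [A.D_mode, e_c_cγ, e_b_cγ]
    try module
  have h9 : A.circ (-1) c (A.circ (-2) b (A.circ (-1) c γ)) = 0 := by
    rw [gcb (-1) (-2) (A.circ (-1) c γ), hccγ, map_zero, neg_zero, if_neg (by norm_num),
      zero_add]
  have I9 : A.circ (-1) (A.circ (-1) c (A.D b)) (A.circ (-1) c γ) = -A.circ (-3) c γ := by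
    rw [A.iter_m1_odd hc hDbo (-1) (A.circ (-1) c γ)]
    have hside : ∀ j : ℕ, 3 ≤ j →
        (A.circ (-1 - (j:ℤ)) c (A.circ (-1 + (j:ℤ)) (A.D b) (A.circ (-1) c γ))
        - A.circ (-1 + -1 - (j:ℤ)) (A.D b) (A.circ (j:ℤ) c (A.circ (-1) c γ))) = 0 := by
      intro j hj
      rw [A.D_mode, e_b_cγ (-1 + (j:ℤ) - 1) (by omega), if_neg (by omega), smul_zero, map_zero,
        e_c_cγ (j:ℤ) (by omega), map_zero, sub_zero]
    rw [fin3 hside]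
    simp (disch := omega) [A.D_mode, e_c_cγ, e_b_cγ, h9]
    try module
  have h10 : A.circ (-2) c (A.circ (-1) b (A.circ (-1) c γ))
      = -A.circ (-1) b (A.circ (-2) c (A.circ (-1) c γ)) := by
    rw [gcb (-2) (-1) (A.circ (-1) c γ), if_neg (by norm_num), add_zero]
  have I10 : A.circ (-1) (A.circ (-2) c b) (A.circ (-1) c γ)
      = -A.circ (-1) b (A.circ (-2) c (A.circ (-1) c γ)) + (2:ℂ) • A.circ (-3) c γ := by
    rw [A.iter_m2_odd hc hb (-1) (A.circ (-1) c γ)]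
    have hside : ∀ j : ℕ, 2 ≤ j →
        ((j:ℂ) + 1) • (A.circ (-2 - (j:ℤ)) c (A.circ (-1 + (j:ℤ)) b (A.circ (-1) c γ))
        + A.circ (-2 + -1 - (j:ℤ)) b (A.circ (j:ℤ) c (A.circ (-1) c γ))) = 0 := by
      intro j hj
      rw [e_b_cγ (-1 + (j:ℤ)) (by omega), if_neg (by omega), map_zero,
        e_c_cγ (j:ℤ) (by omega), map_zero, add_zero, smul_zero]
    rw [fin2 hside]
    simp (disch := omega) [e_b_cγ, e_c_cγ, h10]
    try module
  have I11 : A.circ (-1) (A.circ (-2) c c) γ = A.circ (-2) c (A.circ (-1) c γ) := by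
    rw [A.iter_m2_odd hc hc (-1) γ]
    have hside : ∀ j : ℕ, 1 ≤ j →
        ((j:ℂ) + 1) • (A.circ (-2 - (j:ℤ)) c (A.circ (-1 + (j:ℤ)) c γ)
        + A.circ (-2 + -1 - (j:ℤ)) c (A.circ (j:ℤ) c γ)) = 0 := by
      intro j hj
      rw [zcγ (-1 + (j:ℤ)) (by omega), map_zero, zcγ (j:ℤ) (by omega), map_zero, add_zero,
        smul_zero]
    rw [fin1 hside]
    simp (disch := omega) [zcγ]
  have I12 : A.circ (-2) (A.circ (-1) c (A.D γ)) A.one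
      = (2:ℂ) • A.circ (-1) c (A.circ (-3) γ A.one) + A.circ (-2) c (A.D γ) := by
    rw [A.iter_m1_even (Or.inr hDγe) (-2) A.one]
    have hside : ∀ j : ℕ, 3 ≤ j →
        (A.circ (-1 - (j:ℤ)) c (A.circ (-2 + (j:ℤ)) (A.D γ) A.one)
        + A.circ (-1 + -2 - (j:ℤ)) (A.D γ) (A.circ (j:ℤ) c A.one)) = 0 := by
      intro j hj
      rw [A.D_mode, A.unit_right_nonneg (-2 + (j:ℤ) - 1) γ (by omega), smul_zero, map_zero,
        A.unit_right_nonneg (j:ℤ) c (by omega), map_zero, add_zero]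
    rw [fin3 hside]
    simp (disch := omega) [A.D_mode, A.unit_right_nonneg, ← hDγdef]
    try module
  have I13 : A.circ (-2) (A.circ (-2) c γ) A.one
      = A.circ (-2) c (A.D γ) + (2:ℂ) • A.circ (-3) c γ := by
    rw [A.iter_m2_even (Or.inr hγ) (-2) A.one]
    have hside : ∀ j : ℕ, 2 ≤ j →
        ((j:ℂ) + 1) • (A.circ (-2 - (j:ℤ)) c (A.circ (-2 + (j:ℤ)) γ A.one)
        - A.circ (-2 + -2 - (j:ℤ)) γ (A.circ (j:ℤ) c A.one)) = 0 := by
      intro j hj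
      rw [A.unit_right_nonneg (-2 + (j:ℤ)) γ (by omega), map_zero,
        A.unit_right_nonneg (j:ℤ) c (by omega), map_zero, sub_zero, smul_zero]
    rw [fin2 hside]
    simp (disch := omega) [A.unit_right_nonneg, A.unit_right_wick, ← hDγdef]
    try module
  -- assembled Q-values on composite states
  have hQγγ : A.circ 0 J (A.circ (-1) γ γ)
      = (2:ℂ) • A.circ (-1) c (A.circ (-2) γ γ)
        - (2:ℂ) • A.circ (-2) c (A.circ (-1) γ γ) := by
    rw [dQe γ hγ (-1) γ, hQγ, map_sub, A.circ_sub_left, I3, I4]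
    have s1 : A.circ (-1) γ (A.circ (-1) c (A.D γ)) = A.circ (-1) c (A.circ (-2) γ γ) := by
      rw [gγc (-1) (-1) (A.D γ), hDγdef, gγγ (-1) (-2) A.one, A.unit_right_wick]
    have s2 : A.circ (-1) γ (A.circ (-2) c γ) = A.circ (-2) c (A.circ (-1) γ γ) :=
      gγc (-1) (-2) γ
    rw [s1, s2]
    module
  have hQcγ : A.circ 0 J (A.circ (-1) c γ)
      = -((2:ℂ) • A.circ (-2) c (A.circ (-1) c γ)) := by
    rw [dQo c hc (-1) γ, hQc, hQγ, A.circ_neg_left, I11, map_sub]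
    have s1 : A.circ (-1) c (A.circ (-1) c (A.D γ)) = 0 :=
      VA.half_cancel (gcc (-1) (-1) (A.D γ))
    have s2 : A.circ (-1) c (A.circ (-2) c γ) = -A.circ (-2) c (A.circ (-1) c γ) :=
      gcc (-1) (-2) γ
    rw [s1, s2]
    module
  have hT1 : A.circ 0 J (A.circ (-1) β (A.circ (-1) γ γ))
      = A.circ (-1) c (A.circ (-2) β (A.circ (-1) γ γ))
        + (2:ℂ) • A.circ (-1) c (A.circ (-1) β (A.circ (-2) γ γ))
        + (6:ℂ) • A.circ (-3) c γ := by
    rw [dQe β hβ (-1) (A.circ (-1) γ γ), hQγγ, hQβ, A.circ_add_left, A.circ_smul_left, I1, I2,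
      map_sub, map_smul, map_smul]
    have s1 : A.circ (-1) β (A.circ (-1) c (A.circ (-2) γ γ))
        = A.circ (-1) c (A.circ (-1) β (A.circ (-2) γ γ)) := gβc (-1) (-1) _
    have s2 : A.circ (-1) β (A.circ (-2) c (A.circ (-1) γ γ))
        = A.circ (-2) c (A.circ (-1) β (A.circ (-1) γ γ)) := gβc (-1) (-2) _
    rw [s1, s2]
    module
  have hT2 : A.circ 0 J (A.circ (-1) b (A.circ (-1) c γ))
      = A.circ (-1) c (A.circ (-2) β (A.circ (-1) γ γ))
        + (2:ℂ) • A.circ (-1) c (A.circ (-1) β (A.circ (-2) γ γ))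
        + (3:ℂ) • A.circ (-1) c (A.circ (-3) γ A.one)
        + (3:ℂ) • A.circ (-3) c γ := by
    rw [dQo b hb (-1) (A.circ (-1) c γ), hQb, hQcγ]
    simp only [hLS', hLE', A.circ_add_left, A.circ_sub_left, A.circ_neg_left, A.circ_smul_left,
      map_neg, map_smul, map_add, map_sub, LinearMap.smul_apply, LinearMap.add_apply,
      LinearMap.sub_apply, LinearMap.neg_apply]
    rw [I5, I6, I7, I8, I9, I10]
    module
  have hT3 : A.circ 0 J (A.D γ)
      = (2:ℂ) • A.circ (-1) c (A.circ (-3) γ A.one) - (2:ℂ) • A.circ (-3) c γ := by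
    rw [hDγdef, dQe γ hγ (-2) A.one, hQγ, A.circ_sub_left, I12, I13,
      A.unit_right_nonneg 0 J le_rfl, map_zero]
    module
  rw [hx', map_add, map_sub, map_smul, hT1, hT2, hT3]
  module
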